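/- Let $d_0 > 0$, $R \le R_0$, and $\theta = \sqrt{d_0/(6R_0)}$, and suppose $\Omega \subseteq \overline{B_R(Re_n)} \subset \mathbb{R}^n$ with $0 \in \partial\Omega$, $x_0 = d_0 e_n \in \Omega$. Define $E_\theta = \{x \in \Omega : \langle x - x_0, e_n \rangle \le \theta |x - x_0|\}$ (i.e. with $v_0 = -e_n$). Then every $x \in E_\theta$ satisfies $d(x, \partial\Omega) \le x_n \le 2 d_0$ and $|x|^2 \le 4 d_0^2 + 4 R d_0$; in particular $E_\theta \subset \overline{B_{\sqrt{(1+4R_0)d_0}}(0)}$ provided $d_0 \le 1/4$. -/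

import Mathlib

/-! The enclosing ball $B_R(Re_n)$ gives $|z|^2 \le 2R z_n$ on $\Omega$, so $z_n \ge 0$ there and
$d_0 \le 2R$. Squaring the cone condition and using $|x - x_0|^2 \le 2Rx_n + d_0^2$ leaves a
quadratic inequality in $x_n$ that fails for $x_n > 2d_0$; then $|x|^2 \le 2Rx_n \le 4Rd_0$.
For the distance, the segment from $x$ to its projection $y$ on $\{z_n = 0\}$ meets
$\partial\Omega$, because $y$ is not interior to $\Omega$: the only point of $\Omega$ on that
hyperplane is $0 \in \partial\Omega$. -/

open Metric RealInnerProductSpace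

theorem IsPreconnected.inter_frontier_nonempty {X : Type*} [TopologicalSpace X] {s t : Set X}
    (hs : IsPreconnected s) (hst : (s ∩ t).Nonempty) (hst' : (s \ t).Nonempty) :
    (s ∩ frontier t).Nonempty := by
  by_contra h
  have hsplit : s ⊆ interior t ∪ (closure t)ᶜ := fun x hx => by
    by_contra hx'
    simp only [Set.mem_union, Set.mem_compl_iff, not_or, not_not] at hx'
    exact h ⟨x, hx, hx'.2, hx'.1⟩
  obtain ⟨a, has, hat⟩ := hst
  obtain ⟨b, hbs, hbt⟩ := hst'
  have ha : a ∈ interior t := (hsplit has).resolve_right (not_not.2 (subset_closure hat))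
  have hb : b ∈ (closure t)ᶜ := (hsplit hbs).resolve_left (fun hb => hbt (interior_subset hb))
  obtain ⟨x, -, hxi, hxc⟩ := hs _ _ isOpen_interior isClosed_closure.isOpen_compl hsplit
    ⟨a, has, ha⟩ ⟨b, hbs, hb⟩
  exact hxc (subset_closure (interior_subset hxi))

theorem infDist_frontier_le_dist_of_notMem_interior {E : Type*} [NormedAddCommGroup E]
    [NormedSpace ℝ E] {s : Set E} {x y : E} (hx : x ∈ s) (hy : y ∉ interior s) :
    infDist x (frontier s) ≤ dist x y := by
  by_cases hys : y ∈ s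
  · exact infDist_le_dist_of_mem ⟨subset_closure hys, hy⟩
  obtain ⟨z, hz, hzs⟩ := (convex_segment x y).isPreconnected.inter_frontier_nonempty
    ⟨x, left_mem_segment ℝ x y, hx⟩ ⟨y, right_mem_segment ℝ x y, hys⟩
  calc infDist x (frontier s) ≤ dist x z := infDist_le_dist_of_mem hzs
    _ ≤ dist x y := by
      rw [← dist_add_dist_of_mem_segment hz]
      linarith [dist_nonneg (x := z) (y := y)]

section TangentBall

variable {E : Type*} [NormedAddCommGroup E] [InnerProductSpace ℝ E] {e x : E} {R : ℝ}

theorem norm_sq_le_of_mem_closedBall_smul (he : ‖e‖ = 1) (hx : x ∈ closedBall (R • e) R) :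
    ‖x‖ ^ 2 ≤ 2 * R * ⟪x, e⟫ := by
  have hdist : ‖x - R • e‖ ^ 2 ≤ R ^ 2 := by
    rw [← dist_eq_norm]
    exact pow_le_pow_left₀ dist_nonneg (mem_closedBall.1 hx) 2
  rw [norm_sub_sq_real, norm_smul, he, real_inner_smul_right, mul_one, Real.norm_eq_abs,
    sq_abs] at hdist
  nlinarith

theorem inner_nonneg_of_mem_closedBall_smul (he : ‖e‖ = 1) (hx : x ∈ closedBall (R • e) R) :
    0 ≤ ⟪x, e⟫ := by
  have h := real_inner_le_norm (R • e - x) e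
  rw [inner_sub_left, real_inner_smul_left, real_inner_self_eq_norm_sq, he, ← dist_eq_norm,
    dist_comm] at h
  linarith [mem_closedBall.1 hx]

theorem infDist_frontier_le_inner {Ω : Set E} (he : ‖e‖ = 1) (hΩ : Ω ⊆ closedBall (R • e) R)
    (h0 : (0 : E) ∈ frontier Ω) (hx : x ∈ Ω) : infDist x (frontier Ω) ≤ ⟪x, e⟫ := by
  set y := x - ⟪x, e⟫ • e
  have hy : y ∉ interior Ω := by
    intro hy
    have hy0 : y = 0 := by
      have hball := norm_sq_le_of_mem_closedBall_smul he (hΩ (interior_subset hy))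
      have hye : ⟪y, e⟫ = 0 := by
        simp [y, inner_sub_left, real_inner_smul_left, he]
      rw [hye, mul_zero] at hball
      exact norm_eq_zero.1 (by nlinarith [norm_nonneg y])
    exact disjoint_interior_frontier.ne_of_mem (hy0 ▸ hy) h0 rfl
  calc infDist x (frontier Ω) ≤ dist x y := infDist_frontier_le_dist_of_notMem_interior hx hy
    _ = ⟪x, e⟫ := by
      rw [dist_eq_norm, sub_sub_cancel, norm_smul, he, mul_one, Real.norm_of_nonneg
        (inner_nonneg_of_mem_closedBall_smul he (hΩ hx))]

theorem inner_le_two_mul_of_inner_sub_le_mul_norm {Ω : Set E} {d θ : ℝ} (he : ‖e‖ = 1)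
    (hΩ : Ω ⊆ closedBall (R • e) R) (hR : 0 < R) (hd : 0 < d) (hθ : 6 * R * θ ^ 2 ≤ d)
    (hde : d • e ∈ Ω) (hx : x ∈ Ω) (hcone : ⟪x - d • e, e⟫ ≤ θ * ‖x - d • e‖) :
    ⟪x, e⟫ ≤ 2 * d := by
  set t := ⟪x, e⟫
  have hdR : d ≤ 2 * R := by
    have hball := norm_sq_le_of_mem_closedBall_smul he (hΩ hde)
    rw [norm_smul, he, real_inner_smul_left, real_inner_self_eq_norm_sq, he,
      Real.norm_of_nonneg hd.le] at hball
    nlinarith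
  have hdist : ‖x - d • e‖ ^ 2 ≤ 2 * R * t + d ^ 2 := by
    rw [norm_sub_sq_real, norm_smul, he, real_inner_smul_right, mul_one,
      Real.norm_of_nonneg hd.le]
    nlinarith [norm_sq_le_of_mem_closedBall_smul he (hΩ hx),
      inner_nonneg_of_mem_closedBall_smul he (hΩ hx)]
  have hcone' : t - d ≤ θ * ‖x - d • e‖ := by
    rwa [inner_sub_left, real_inner_smul_left, real_inner_self_eq_norm_sq, he, one_pow,
      mul_one] at hcone
  by_contra! ht
  have hsq : (t - d) ^ 2 ≤ θ ^ 2 * ‖x - d • e‖ ^ 2 := by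
    rw [← mul_pow]
    exact pow_le_pow_left₀ (by linarith) hcone' 2
  have hquad : d * (2 * R * t + d ^ 2) < 6 * R * (t - d) ^ 2 := by
    -- 6R(t-d)² - d(2Rt + d²) = 2R(3t - d)(t - 2d) + d²(2R - d)
    nlinarith [mul_pos (mul_pos hR (by linarith : 0 < 3 * t - d)) (by linarith : 0 < t - 2 * d),
      mul_nonneg (sq_nonneg d) (by linarith : 0 ≤ 2 * R - d)]
  have hcone_sq : 6 * R * (t - d) ^ 2 ≤ d * (2 * R * t + d ^ 2) :=
    calc 6 * R * (t - d) ^ 2 ≤ 6 * R * (θ ^ 2 * ‖x - d • e‖ ^ 2) := by gcongr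
      _ = 6 * R * θ ^ 2 * ‖x - d • e‖ ^ 2 := by ring
      _ ≤ d * ‖x - d • e‖ ^ 2 := by gcongr
      _ ≤ d * (2 * R * t + d ^ 2) := by gcongr
  linarith

end TangentBall

open RealInnerProductSpace in
theorem stmt_16_general (n : ℕ) (d₀ R R₀ : ℝ) (hd₀ : 0 < d₀) (hR : 0 < R) (hRR₀ : R ≤ R₀)
    (θ : ℝ) (hθ : θ = Real.sqrt (d₀ / (6 * R₀)))
    (Ω : Set (EuclideanSpace ℝ (Fin (n + 1))))
    (hΩ : Ω ⊆ Metric.closedBall (R • EuclideanSpace.single (Fin.last n) (1 : ℝ)) R)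
    (htouch : (0 : EuclideanSpace ℝ (Fin (n + 1))) ∈ frontier Ω)
    (x₀ : EuclideanSpace ℝ (Fin (n + 1)))
    (hx₀ : x₀ = d₀ • EuclideanSpace.single (Fin.last n) (1 : ℝ)) (hx₀Ω : x₀ ∈ Ω) :
    ∀ x ∈ {x ∈ Ω | ⟪x - x₀, EuclideanSpace.single (Fin.last n) (1 : ℝ)⟫ ≤ θ * ‖x - x₀‖},
      Metric.infDist x (frontier Ω) ≤ x (Fin.last n) ∧
      x (Fin.last n) ≤ 2 * d₀ ∧
      ‖x‖ ^ 2 ≤ 4 * d₀ ^ 2 + 4 * R * d₀ ∧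
      x ∈ Metric.closedBall (0 : EuclideanSpace ℝ (Fin (n + 1)))
        (Real.sqrt ((1 + 4 * R₀) * d₀)) := by
  rintro x ⟨hxΩ, hcone⟩
  set e := EuclideanSpace.single (Fin.last n) (1 : ℝ)
  have he : ‖e‖ = 1 := by simp [e]
  have hxe : x (Fin.last n) = ⟪x, e⟫ := by simp [e, EuclideanSpace.inner_single_right]
  subst hx₀
  have hθR : 6 * R * θ ^ 2 ≤ d₀ := by
    have hR₀ : 0 < R₀ := hR.trans_le hRR₀
    rw [hθ, Real.sq_sqrt (by positivity), mul_div_assoc', div_le_iff₀ (by positivity)]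
    nlinarith
  have hxn := inner_le_two_mul_of_inner_sub_le_mul_norm he hΩ hR hd₀ hθR hx₀Ω hxΩ hcone
  have hnorm : ‖x‖ ^ 2 ≤ 4 * R * d₀ := by
    nlinarith [norm_sq_le_of_mem_closedBall_smul he (hΩ hxΩ)]
  rw [hxe, mem_closedBall_zero_iff]
  refine ⟨infDist_frontier_le_inner he hΩ htouch hxΩ, hxn, by nlinarith, ?_⟩
  exact Real.le_sqrt_of_sq_le (by nlinarith)

open RealInnerProductSpace in
theorem stmt_16 (n : ℕ) (d₀ R R₀ : ℝ) (hd₀ : 0 < d₀) (hR : 0 < R) (hRR₀ : R ≤ R₀)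
    (hd₀small : d₀ ≤ 1 / 4)
    (θ : ℝ) (hθ : θ = Real.sqrt (d₀ / (6 * R₀)))
    (Ω : Set (EuclideanSpace ℝ (Fin (n + 1))))
    (hΩ : Ω ⊆ Metric.closedBall (R • EuclideanSpace.single (Fin.last n) (1 : ℝ)) R)
    (htouch : (0 : EuclideanSpace ℝ (Fin (n + 1))) ∈ frontier Ω)
    (x₀ : EuclideanSpace ℝ (Fin (n + 1)))
    (hx₀ : x₀ = d₀ • EuclideanSpace.single (Fin.last n) (1 : ℝ)) (hx₀Ω : x₀ ∈ Ω) :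
    ∀ x ∈ {x ∈ Ω | ⟪x - x₀, EuclideanSpace.single (Fin.last n) (1 : ℝ)⟫ ≤ θ * ‖x - x₀‖},
      Metric.infDist x (frontier Ω) ≤ x (Fin.last n) ∧
      x (Fin.last n) ≤ 2 * d₀ ∧
      ‖x‖ ^ 2 ≤ 4 * d₀ ^ 2 + 4 * R * d₀ ∧
      x ∈ Metric.closedBall (0 : EuclideanSpace ℝ (Fin (n + 1)))
        (Real.sqrt ((1 + 4 * R₀) * d₀)) :=
  stmt_16_general n d₀ R R₀ hd₀ hR hRR₀ θ hθ Ω hΩ htouch x₀ hx₀ hx₀Ω
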